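/- (Daleckiĭ–Kreĭn for polynomials on diagonal matrices) Let Λ = diag(λ₁,…,λₙ) and f a polynomial. Then the derivative of X ↦ f(X) at Λ in direction H equals F ∘ H (Hadamard product), where F_{ij} = f[λᵢ,λⱼ] is the divided difference, defined as (f(λⱼ)−f(λᵢ))/(λⱼ−λᵢ) if λᵢ ≠ λⱼ and f′(λᵢ) otherwise. Concretely: lim_{ε→0} (f(Λ + εH) − f(Λ))/ε has (i,j) entry f[λᵢ,λⱼ]·H_{ij}. -/

import Mathlib

open Matrix Polynomial

attribute [local instance] Matrix.normedAddCommGroup Matrix.normedSpace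

/-- The divided difference `f[a,b]` of a polynomial `f`. -/
noncomputable def divDiff (f : Polynomial ℂ) (a b : ℂ) : ℂ :=
  if a = b then (Polynomial.derivative f).eval a
  else (f.eval b - f.eval a) / (b - a)

section aux

variable {n : Type*} [Fintype n] [DecidableEq n]

lemma hasDerivAt_matrix {f : ℂ → Matrix n n ℂ} {f' : Matrix n n ℂ} {x : ℂ} :
    HasDerivAt f f' x ↔ ∀ i j, HasDerivAt (fun ε => f ε i j) (f' i j) x := by
  exact (hasDerivAt_pi (φ := fun ε i => f ε i)).trans (forall_congr' fun i => hasDerivAt_pi)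

lemma hasDerivAt_matrix_mul {A B : ℂ → Matrix n n ℂ} {A' B' : Matrix n n ℂ} {x : ℂ}
    (hA : HasDerivAt A A' x) (hB : HasDerivAt B B' x) :
    HasDerivAt (fun ε => A ε * B ε) (A' * B x + A x * B') x := by
  rw [hasDerivAt_matrix] at *
  intro i j
  simp only [Matrix.mul_apply, Matrix.add_apply]
  rw [← Finset.sum_add_distrib]
  exact HasDerivAt.fun_sum fun y _ => (hA i y).mul (hB y j)

lemma divDiff_add (f g : Polynomial ℂ) (a b : ℂ) :
    divDiff (f + g) a b = divDiff f a b + divDiff g a b := by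
  unfold divDiff
  split_ifs with h
  · simp
  · simp [eval_add]; ring

lemma divDiff_smul (c : ℂ) (f : Polynomial ℂ) (a b : ℂ) :
    divDiff (c • f) a b = c * divDiff f a b := by
  unfold divDiff
  split_ifs with h
  · simp
  · simp [eval_smul, smul_eq_mul]; ring

lemma divDiff_pow_succ (k : ℕ) (a b : ℂ) :
    divDiff (X ^ (k + 1)) a b = divDiff (X ^ k) a b * b + a ^ k := by
  unfold divDiff
  split_ifs with h
  · subst h
    cases k with
    | zero => simp
    | succ m =>
      simp [derivative_pow, pow_succ]
  · have hba : b - a ≠ 0 := sub_ne_zero.mpr (fun hh => h hh.symm)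
    field_simp
    simp
    ring

end aux

/-- Daleckiĭ–Kreĭn theorem for polynomials at a diagonal matrix `Λ = diagonal l`:
the derivative of `ε ↦ f(Λ + εH)` at `ε = 0` is the Hadamard product `F ∘ H`
with `F i j = f[lᵢ, lⱼ]`. -/
theorem stmt11 {n : Type*} [Fintype n] [DecidableEq n]
    (l : n → ℂ) (H : Matrix n n ℂ) (f : Polynomial ℂ) :
    HasDerivAt (fun ε : ℂ => aeval (Matrix.diagonal l + ε • H) f)
      (Matrix.of fun i j => divDiff f (l i) (l j) * H i j) 0 := by
  set Λ : Matrix n n ℂ := Matrix.diagonal l with hΛ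
  have hM : HasDerivAt (fun ε : ℂ => Λ + ε • H) H 0 := by
    have := ((hasDerivAt_id (0 : ℂ)).smul_const H).const_add Λ
    rwa [one_smul] at this
  have hM0 : (fun ε : ℂ => Λ + ε • H) 0 = Λ := by simp
  -- powers
  have hpow : ∀ k : ℕ, HasDerivAt (fun ε : ℂ => (Λ + ε • H) ^ k)
      (Matrix.of fun i j => divDiff (X ^ k) (l i) (l j) * H i j) 0 := by
    intro k
    induction k with
    | zero =>
      have : (Matrix.of fun i j => divDiff ((X : Polynomial ℂ) ^ 0) (l i) (l j) * H i j)
          = (0 : Matrix n n ℂ) := by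
        ext i j
        simp [divDiff]
      rw [this]
      simp only [pow_zero]
      exact (hasDerivAt_const (0:ℂ) ((1 : Matrix n n ℂ)))
    | succ k ih =>
      have h1 := hasDerivAt_matrix_mul ih hM
      simp only [hM0] at h1
      have h2 : (Matrix.of fun i j => divDiff (X ^ k) (l i) (l j) * H i j) * Λ
            + ((Λ + (0:ℂ) • H) ^ k) * H
          = Matrix.of fun i j => divDiff (X ^ (k + 1)) (l i) (l j) * H i j := by
        ext i j
        have hΛk : ((Λ + (0:ℂ) • H) ^ k) = Matrix.diagonal (fun i => l i ^ k) := by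
          simp [hΛ, Matrix.diagonal_pow]
        rw [hΛk]
        simp only [Matrix.add_apply, Matrix.mul_diagonal, Matrix.diagonal_mul,
          Matrix.of_apply, divDiff_pow_succ, hΛ]
        ring
      have h3 : (fun ε : ℂ => (Λ + ε • H) ^ k * (Λ + ε • H))
          = fun ε : ℂ => (Λ + ε • H) ^ (k + 1) := by
        funext ε; rw [← pow_succ]
      rw [← h2, ← h3]
      convert h1 using 2 <;> simp
  -- general polynomial by induction
  induction f using Polynomial.induction_on' with
  | add p q hp hq =>
    have := hp.add hq
    have he : (Matrix.of fun i j => divDiff p (l i) (l j) * H i j)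
          + (Matrix.of fun i j => divDiff q (l i) (l j) * H i j)
        = Matrix.of fun i j => divDiff (p + q) (l i) (l j) * H i j := by
      ext i j
      simp [divDiff_add]
      ring
    rw [← he]
    simp only [map_add]
    exact this
  | monomial k c =>
    have he : ∀ A : Matrix n n ℂ, aeval A ((monomial k) c) = c • A ^ k := by
      intro A
      rw [aeval_monomial, ← Algebra.smul_def]
    simp only [he]
    have := (hpow k).const_smul c
    have he2 : c • (Matrix.of fun i j => divDiff (X ^ k) (l i) (l j) * H i j)
        = Matrix.of fun i j => divDiff ((monomial k) c) (l i) (l j) * H i j := by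
      ext i j
      have : (monomial k c : Polynomial ℂ) = c • X ^ k := by
        rw [smul_eq_C_mul, C_mul_X_pow_eq_monomial]
      simp [this, divDiff_smul, smul_eq_mul]
      ring
    rw [← he2]
    exact this
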